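/- Let T_N be the lower triangular (N+1)×(N+1) block Toeplitz contraction built from operators C₀,...,C_N : M → N, and identify M with the first coordinate subspace of M^{N+1}. Then the sequence of restricted shorted operators (D²_{T_k})_M restricted to M is non-increasing in k: (D²_{T_k})_M ↾ M ≥ (D²_{T_{k+1}})_M ↾ M for k = 0, ..., N-1. -/

import Mathlib

set_option synthInstance.maxHeartbeats 400000
open ContinuousLinearMap

variable {M N : Type*} [NormedAddCommGroup M] [InnerProductSpace ℂ M] [CompleteSpace M]
  [NormedAddCommGroup N] [InnerProductSpace ℂ N] [CompleteSpace N]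


instance piLpCompleteSpace {ι : Type*} [Fintype ι] (E : ι → Type*)
    [∀ i, NormedAddCommGroup (E i)] [∀ i, CompleteSpace (E i)] :
    CompleteSpace (PiLp 2 E) :=
  inferInstance

/-- `W` is the Kreĭn shorted operator of `S` with respect to the closed subspace `K`. -/
def IsShortedOp {H : Type*} [NormedAddCommGroup H] [InnerProductSpace ℂ H]
    [CompleteSpace H] (S W : H →L[ℂ] H) (K : Submodule ℂ H) : Prop :=
  IsSelfAdjoint W ∧
    ∀ f : H, (inner ℂ (W f) f : ℂ).re = ⨅ φ : Kᗮ, (inner ℂ (S (f + φ)) (f + φ) : ℂ).re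

/-- The first coordinate copy of `M` inside `M^{k+1}`. -/
def firstCoord (M : Type*) [NormedAddCommGroup M] [InnerProductSpace ℂ M] (k : ℕ) :
    Submodule ℂ (PiLp 2 fun _ : Fin (k + 1) => M) where
  carrier := {f | ∀ i : Fin (k + 1), i ≠ 0 → f i = 0}
  add_mem' := by
    intro a b ha hb i hi
    show a i + b i = 0
    rw [ha i hi, hb i hi, add_zero]
  zero_mem' := fun i _ => rfl
  smul_mem' := by
    intro c a ha i hi
    show c • a i = 0
    rw [ha i hi, smul_zero]

/-- The embedding of `M` onto the first coordinate of `M^{k+1}`. -/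
def emb (M : Type*) [NormedAddCommGroup M] [InnerProductSpace ℂ M] (k : ℕ) (m : M) :
    PiLp 2 fun _ : Fin (k + 1) => M :=
  WithLp.toLp 2 (fun i => if i = 0 then m else 0)

/-
Extension by zero `ι : M^{k+1} → M^{l+1}` (`k ≤ l`) is an isometry that fixes `M` and maps `Mᗮ`
into `Mᗮ`. Since `T` is lower triangular, `T_k` is the compression of `T_l` to the first `k + 1`
coordinates, so `‖T_k g‖ ≤ ‖T_l (ι g)‖` and the quadratic form of `D²_{T_l}` at `ι g` is at most
that of `D²_{T_k}` at `g`. The shorted operator at `m ∈ M` is the infimum of this form over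
`m + Mᗮ`, and `ι` maps `m + Mᗮ` into the corresponding set for `l`; the infimum for `l` is finite
because `T_l`, a compression of the contraction `T_N`, is a contraction.
-/

theorem Fin.sum_castLE_eq_sum {A : Type*} [AddCommMonoid A] {n m : ℕ} (h : n ≤ m)
    {g : Fin m → A} (hg : ∀ i : Fin m, n ≤ (i : ℕ) → g i = 0) :
    ∑ i : Fin n, g (Fin.castLE h i) = ∑ i, g i :=
  Fintype.sum_of_injective _ (Fin.castLE_injective h) _ g
    (fun i hi => hg i (by simpa [Fin.range_castLE] using hi)) fun _ => rfl

theorem Fin.sum_castLE_le_sum {A : Type*} [AddCommMonoid A] [PartialOrder A]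
    [IsOrderedAddMonoid A] {n m : ℕ} (h : n ≤ m) {g : Fin m → A} (hg : ∀ i, 0 ≤ g i) :
    ∑ i : Fin n, g (Fin.castLE h i) ≤ ∑ i, g i :=
  (Finset.sum_map Finset.univ (Fin.castLEEmb h) g).symm.trans_le
    (Finset.sum_le_univ_sum_of_nonneg hg)

section ExtendByZero

variable (R : Type*) {E : Type*} [Semiring R] [SeminormedAddCommGroup E] [Module R E] {n m : ℕ}

def PiLp.extendByZero (h : n ≤ m) :
    (PiLp 2 fun _ : Fin n => E) →ₗᵢ[R] PiLp 2 fun _ : Fin m => E where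
  toFun g := WithLp.toLp 2 fun i => if hi : (i : ℕ) < n then g ⟨i, hi⟩ else 0
  map_add' g g' := by
    ext i
    simp only [PiLp.add_apply]
    split_ifs <;> simp
  map_smul' c g := by
    ext i
    simp only [PiLp.smul_apply, RingHom.id_apply]
    split_ifs <;> simp
  norm_map' g := by
    rw [← sq_eq_sq₀ (norm_nonneg _) (norm_nonneg _), PiLp.norm_sq_eq_of_L2,
      PiLp.norm_sq_eq_of_L2, ← Fin.sum_castLE_eq_sum h]
    · simp
    · intro i hi
      simp [hi.not_gt]

variable {R}

theorem PiLp.extendByZero_apply (h : n ≤ m) (g : PiLp 2 fun _ : Fin n => E) (i : Fin m) :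
    extendByZero R h g i = if hi : (i : ℕ) < n then g ⟨i, hi⟩ else 0 :=
  rfl

theorem PiLp.extendByZero_apply_castLE (h : n ≤ m) (g : PiLp 2 fun _ : Fin n => E) (i : Fin n) :
    extendByZero R h g (Fin.castLE h i) = g i := by
  simp [extendByZero_apply]

theorem PiLp.extendByZero_apply_of_le (h : n ≤ m) (g : PiLp 2 fun _ : Fin n => E) {i : Fin m}
    (hi : n ≤ (i : ℕ)) : extendByZero R h g i = 0 := by
  simp [extendByZero_apply, hi.not_gt]

end ExtendByZero

section FirstCoord

variable {E : Type*} [NormedAddCommGroup E] [InnerProductSpace ℂ E]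

theorem extendByZero_emb {k l : ℕ} (h : k ≤ l) (m : E) :
    PiLp.extendByZero ℂ (Nat.succ_le_succ h) (emb E k m) = emb E l m := by
  ext i
  simp only [PiLp.extendByZero_apply, emb, PiLp.toLp_apply]
  rcases eq_or_ne i 0 with rfl | hi
  · simp
  · grind [Fin.ext_iff]

theorem mem_orthogonal_firstCoord_iff {k : ℕ} {φ : PiLp 2 fun _ : Fin (k + 1) => E} :
    φ ∈ (firstCoord E k)ᗮ ↔ φ 0 = 0 := by
  constructor
  · intro hφ
    have hemb : emb E k (φ 0) ∈ firstCoord E k := fun i hi => by simp [emb, hi]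
    have h0 := hφ _ hemb
    rw [PiLp.inner_apply, Finset.sum_eq_single 0 (fun i _ hi => by simp [emb, hi]) (by simp)] at h0
    simpa [emb] using h0
  · intro hφ f hf
    rw [PiLp.inner_apply]
    refine Finset.sum_eq_zero fun i _ => ?_
    by_cases hi : i = 0
    · simp [hi, hφ]
    · simp [hf i hi]

theorem extendByZero_mem_orthogonal_firstCoord {k l : ℕ} (h : k ≤ l)
    {φ : PiLp 2 fun _ : Fin (k + 1) => E} (hφ : φ ∈ (firstCoord E k)ᗮ) :
    PiLp.extendByZero ℂ (Nat.succ_le_succ h) φ ∈ (firstCoord E l)ᗮ := by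
  rw [mem_orthogonal_firstCoord_iff] at hφ ⊢
  simpa [hφ] using PiLp.extendByZero_apply_castLE (R := ℂ) (Nat.succ_le_succ h) φ 0

end FirstCoord

section Toeplitz

variable {𝕜 E F : Type*} [NontriviallyNormedField 𝕜] [NormedAddCommGroup E] [NormedSpace 𝕜 E]
  [NormedAddCommGroup F] [NormedSpace 𝕜 F]

def IsLowerToeplitz (C : ℕ → E →L[𝕜] F)
    (T : (k : ℕ) → (PiLp 2 fun _ : Fin (k + 1) => E) →L[𝕜] PiLp 2 fun _ : Fin (k + 1) => F) :
    Prop :=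
  ∀ (k : ℕ) (f : PiLp 2 fun _ : Fin (k + 1) => E) (i : Fin (k + 1)),
    T k f i = ∑ j : Fin (k + 1), if (j : ℕ) ≤ (i : ℕ) then C ((i : ℕ) - (j : ℕ)) (f j) else 0

variable {C : ℕ → E →L[𝕜] F}
  {T : (k : ℕ) → (PiLp 2 fun _ : Fin (k + 1) => E) →L[𝕜] PiLp 2 fun _ : Fin (k + 1) => F}
  {k l : ℕ}

theorem IsLowerToeplitz.apply_extendByZero_castLE (hT : IsLowerToeplitz C T) (h : k ≤ l)
    (g : PiLp 2 fun _ : Fin (k + 1) => E) (i : Fin (k + 1)) :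
    T l (PiLp.extendByZero 𝕜 (Nat.succ_le_succ h) g) (Fin.castLE (Nat.succ_le_succ h) i) =
      T k g i := by
  rw [hT, hT, ← Fin.sum_castLE_eq_sum (Nat.succ_le_succ h)]
  · simp [PiLp.extendByZero_apply_castLE]
  · intro j hj
    simp [PiLp.extendByZero_apply_of_le _ _ hj]

theorem IsLowerToeplitz.norm_apply_le (hT : IsLowerToeplitz C T) (h : k ≤ l)
    (g : PiLp 2 fun _ : Fin (k + 1) => E) :
    ‖T k g‖ ≤ ‖T l (PiLp.extendByZero 𝕜 (Nat.succ_le_succ h) g)‖ := by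
  rw [← sq_le_sq₀ (norm_nonneg _) (norm_nonneg _), PiLp.norm_sq_eq_of_L2,
    PiLp.norm_sq_eq_of_L2]
  simp_rw [← hT.apply_extendByZero_castLE h]
  exact Fin.sum_castLE_le_sum _ fun i => sq_nonneg ‖T l (PiLp.extendByZero 𝕜 _ g) i‖

theorem IsLowerToeplitz.opNorm_mono (hT : IsLowerToeplitz C T) (h : k ≤ l) : ‖T k‖ ≤ ‖T l‖ :=
  opNorm_le_bound _ (norm_nonneg _) fun g =>
    calc ‖T k g‖ ≤ ‖T l (PiLp.extendByZero 𝕜 (Nat.succ_le_succ h) g)‖ := hT.norm_apply_le h g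
      _ ≤ ‖T l‖ * ‖g‖ := by
        simpa using (T l).le_opNorm (PiLp.extendByZero 𝕜 (Nat.succ_le_succ h) g)

end Toeplitz

section Shorted

variable {H H' : Type*} [NormedAddCommGroup H] [InnerProductSpace ℂ H] [CompleteSpace H]
  [NormedAddCommGroup H'] [InnerProductSpace ℂ H'] [CompleteSpace H']

theorem re_inner_one_sub_adjoint_comp_self_apply (T : H →L[ℂ] H') (x : H) :
    (inner ℂ ((1 - adjoint T ∘L T) x) x : ℂ).re = ‖x‖ ^ 2 - ‖T x‖ ^ 2 := by
  rw [sub_apply, one_apply_eq_self, comp_apply, inner_sub_left, Complex.sub_re,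
    adjoint_inner_left, ← RCLike.re_to_complex, ← RCLike.re_to_complex, inner_self_eq_norm_sq, inner_self_eq_norm_sq]

theorem re_inner_one_sub_adjoint_comp_self_nonneg {T : H →L[ℂ] H'} (hT : ‖T‖ ≤ 1) (x : H) :
    0 ≤ (inner ℂ ((1 - adjoint T ∘L T) x) x : ℂ).re := by
  rw [re_inner_one_sub_adjoint_comp_self_apply, sub_nonneg]
  gcongr
  simpa using T.le_opNorm x |>.trans (mul_le_of_le_one_left (norm_nonneg x) hT)

theorem IsShortedOp.re_inner_map_le {S W : H →L[ℂ] H} {S' W' : H' →L[ℂ] H'}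
    {K : Submodule ℂ H} {K' : Submodule ℂ H'} (hW : IsShortedOp S W K)
    (hW' : IsShortedOp S' W' K') (J : H →ₗ[ℂ] H') (hJK : ∀ φ ∈ Kᗮ, J φ ∈ K'ᗮ)
    (hJS : ∀ x, (inner ℂ (S' (J x)) (J x) : ℂ).re ≤ (inner ℂ (S x) x : ℂ).re)
    (hS' : ∀ x, 0 ≤ (inner ℂ (S' x) x : ℂ).re) (f : H) :
    (inner ℂ (W' (J f)) (J f) : ℂ).re ≤ (inner ℂ (W f) f : ℂ).re := by
  rw [hW.2, hW'.2]
  refine le_ciInf fun φ => ?_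
  have hbdd : BddBelow (Set.range fun ψ : K'ᗮ => (inner ℂ (S' (J f + ψ)) (J f + ψ) : ℂ).re) :=
    ⟨0, by rintro _ ⟨ψ, rfl⟩; exact hS' _⟩
  calc ⨅ ψ : K'ᗮ, (inner ℂ (S' (J f + ψ)) (J f + ψ) : ℂ).re
      ≤ (inner ℂ (S' (J (f + φ))) (J (f + φ)) : ℂ).re := by
        rw [map_add]
        exact ciInf_le hbdd ⟨J φ, hJK φ φ.2⟩
    _ ≤ (inner ℂ (S (f + φ)) (f + φ) : ℂ).re := hJS _

end Shorted

/-- Let `T_N` be the lower triangular block Toeplitz contraction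
built from `C₀, …, C_N : M → N`.  Then the sequence of shorted operators
`(D²_{T_k})_M ↾ M` is non-increasing in `k`. -/
theorem shorted_toeplitz_antitone (C : ℕ → (M →L[ℂ] N)) (Nn : ℕ)
    (T : (k : ℕ) → (PiLp 2 fun _ : Fin (k + 1) => M) →L[ℂ]
      (PiLp 2 fun _ : Fin (k + 1) => N))
    (hToe : ∀ (k : ℕ) (f : PiLp 2 fun _ : Fin (k + 1) => M) (i : Fin (k + 1)),
      T k f i = ∑ j : Fin (k + 1), if (j : ℕ) ≤ (i : ℕ) then C ((i : ℕ) - (j : ℕ)) (f j) else 0)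
    (hTc : ‖T Nn‖ ≤ 1)
    (W : (k : ℕ) → (PiLp 2 fun _ : Fin (k + 1) => M) →L[ℂ]
      (PiLp 2 fun _ : Fin (k + 1) => M))
    (hW : ∀ k, IsShortedOp (1 - (ContinuousLinearMap.adjoint (T k)) ∘L T k)
      (W k) (firstCoord M k)) :
    ∀ k : ℕ, k + 1 ≤ Nn → ∀ m : M,
      (inner ℂ (W (k + 1) (emb M (k + 1) m)) (emb M (k + 1) m) : ℂ).re ≤
        (inner ℂ (W k (emb M k m)) (emb M k m) : ℂ).re := by
  intro k hk m
  have hT : IsLowerToeplitz C T := hToe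
  have hle : k ≤ k + 1 := k.le_succ
  let J := PiLp.extendByZero ℂ (E := M) (Nat.succ_le_succ hle)
  have hJS (x : PiLp 2 fun _ : Fin (k + 1) => M) :
      (inner ℂ ((1 - adjoint (T (k + 1)) ∘L T (k + 1)) (J x)) (J x) : ℂ).re ≤
        (inner ℂ ((1 - adjoint (T k) ∘L T k) x) x : ℂ).re := by
    rw [re_inner_one_sub_adjoint_comp_self_apply, re_inner_one_sub_adjoint_comp_self_apply,
      J.norm_map]
    gcongr
    exact hT.norm_apply_le hle x
  rw [← extendByZero_emb hle]
  exact (hW k).re_inner_map_le (hW (k + 1)) J.toLinearMap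
    (fun φ hφ => extendByZero_mem_orthogonal_firstCoord hle hφ) hJS
    (re_inner_one_sub_adjoint_comp_self_nonneg ((hT.opNorm_mono hk).trans hTc)) _
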